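/- Let ξ : Fin m → ℤ, η : Fin n → ℤ, ξ' : Fin m' → ℤ, η' : Fin n' → ℤ take values in {1, −1}, and let ξ ⊕ ξ' : Fin (m + m') → ℤ and η ⊕ η' : Fin (n + n') → ℤ denote the concatenated sign functions (via Fin.append). Then the assignment sending a vertex (i, j) of the product quiver A(ξ, η) × A(ξ', η') to i + j, and an arrow (e, e') with labels (x, y) and (x', y') to the arrow of A(ξ ⊕ ξ', η ⊕ η') with label (x ⊕ x', y ⊕ y') (concatenated tuples via Fin.append), is a well-defined prefunctor τ : A(ξ, η) × A(ξ', η') ⥤q A(ξ ⊕ ξ', η ⊕ η'). -/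

import Mathlib

universe u v

/-- The product quiver: an arrow `(a,c) ⟶ (b,d)` is a pair of an arrow `a ⟶ b`
and an arrow `c ⟶ d`. -/
instance prodQuiver (X Y : Type u) [Quiver.{v} X] [Quiver.{v} Y] : Quiver (X × Y) :=
  ⟨fun p q => (p.1 ⟶ q.1) × (p.2 ⟶ q.2)⟩

/-- The standard account `A(ξ, ζ)`: its vertices are the integers. -/
structure Acct {m n : ℕ} (ξ : Fin m → ℤ) (ζ : Fin n → ℤ) where
  val : ℤ

/-- An arrow from `r` to `s` in the standard account is a pair of tuples
`(x, y)` satisfying the continuity equation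
`s - r = ∑ i, ξ i * x i - ∑ j, ζ j * y j`; its label is the pair `(x, y)`. -/
instance accQuiver {m n : ℕ} (ξ : Fin m → ℤ) (ζ : Fin n → ℤ) : Quiver (Acct ξ ζ) :=
  ⟨fun r s => {xy : (Fin m → ℕ) × (Fin n → ℕ) //
    s.val - r.val = (∑ i, ξ i * (xy.1 i : ℤ)) - (∑ j, ζ j * (xy.2 j : ℤ))}⟩

/-! The net flow `∑ ξ x - ∑ ζ y` of a concatenated label is the sum of the net flows of its
halves, so concatenating the labels of `r ⟶ s` and `r' ⟶ s'` solves the continuity equation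
for `r + r' ⟶ s + s'`. -/

theorem Fin.sum_append_mul_append_cast {R : Type*} [NonAssocSemiring R] {a b : ℕ}
    (f : Fin a → R) (g : Fin b → R) (u : Fin a → ℕ) (v : Fin b → ℕ) :
    ∑ i, Fin.append f g i * ((Fin.append u v i : ℕ) : R) =
      ∑ i, f i * (u i : R) + ∑ j, g j * (v j : R) := by
  simp only [Fin.sum_univ_add, Fin.append_left, Fin.append_right]

namespace Acct

/-- An arrow `r ⟶ s` of `A(ξ, ζ)` is a label with `s - r = netFlow ξ ζ label`. -/
def netFlow {m n : ℕ} (ξ : Fin m → ℤ) (ζ : Fin n → ℤ) (xy : (Fin m → ℕ) × (Fin n → ℕ)) : ℤ :=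
  (∑ i, ξ i * (xy.1 i : ℤ)) - (∑ j, ζ j * (xy.2 j : ℤ))

variable {m n m' n' : ℕ} {ξ : Fin m → ℤ} {η : Fin n → ℤ} {ξ' : Fin m' → ℤ} {η' : Fin n' → ℤ}

theorem netFlow_append (x : Fin m → ℕ) (y : Fin n → ℕ) (x' : Fin m' → ℕ) (y' : Fin n' → ℕ) :
    netFlow (Fin.append ξ ξ') (Fin.append η η') (Fin.append x x', Fin.append y y') =
      netFlow ξ η (x, y) + netFlow ξ' η' (x', y') := by
  simp only [netFlow, Fin.sum_append_mul_append_cast]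
  ring

def appendHom {r s : Acct ξ η} {r' s' : Acct ξ' η'} (e : r ⟶ s) (e' : r' ⟶ s') :
    (⟨r.val + r'.val⟩ : Acct (Fin.append ξ ξ') (Fin.append η η')) ⟶ ⟨s.val + s'.val⟩ :=
  ⟨(Fin.append e.val.1 e'.val.1, Fin.append e.val.2 e'.val.2), by
    have he : s.val - r.val = netFlow ξ η e.val := e.property
    have he' : s'.val - r'.val = netFlow ξ' η' e'.val := e'.property
    change _ = netFlow _ _ _
    rw [netFlow_append, ← he, ← he']
    ring⟩

/-- The paper's 2-cell `τ`. -/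
def tensor (ξ : Fin m → ℤ) (η : Fin n → ℤ) (ξ' : Fin m' → ℤ) (η' : Fin n' → ℤ) :
    (Acct ξ η × Acct ξ' η') ⥤q Acct (Fin.append ξ ξ') (Fin.append η η') where
  obj p := ⟨p.1.val + p.2.val⟩
  map e := appendHom e.1 e.2

end Acct

theorem statement9_general {m n m' n' : ℕ}
    (ξ : Fin m → ℤ) (η : Fin n → ℤ) (ξ' : Fin m' → ℤ) (η' : Fin n' → ℤ) :
    ∃ τ : (Acct ξ η × Acct ξ' η') ⥤q Acct (Fin.append ξ ξ') (Fin.append η η'),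
      (∀ p : Acct ξ η × Acct ξ' η', (τ.obj p).val = p.1.val + p.2.val) ∧
      (∀ (p q : Acct ξ η × Acct ξ' η') (e : p ⟶ q),
        (τ.map e).val =
          (Fin.append e.1.val.1 e.2.val.1, Fin.append e.1.val.2 e.2.val.2)) :=
  ⟨Acct.tensor ξ η ξ' η', fun _ => rfl, fun _ _ _ => rfl⟩

/-- the assignment sending a vertex `(i, j)` of the product quiver
`A(ξ, η) × A(ξ', η')` to `i + j`, and an arrow `(e, e')` with labels `(x, y)` and
`(x', y')` to the arrow of `A(ξ ⊕ ξ', η ⊕ η')` with label `(x ⊕ x', y ⊕ y')`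
(concatenation via `Fin.append`), is a well-defined prefunctor `τ`. -/
theorem statement9 {m n m' n' : ℕ}
    (ξ : Fin m → ℤ) (η : Fin n → ℤ) (ξ' : Fin m' → ℤ) (η' : Fin n' → ℤ)
    (hξ : ∀ i, ξ i = 1 ∨ ξ i = -1) (hη : ∀ i, η i = 1 ∨ η i = -1)
    (hξ' : ∀ i, ξ' i = 1 ∨ ξ' i = -1) (hη' : ∀ i, η' i = 1 ∨ η' i = -1) :
    ∃ τ : (Acct ξ η × Acct ξ' η') ⥤q Acct (Fin.append ξ ξ') (Fin.append η η'),
      (∀ p : Acct ξ η × Acct ξ' η', (τ.obj p).val = p.1.val + p.2.val) ∧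
      (∀ (p q : Acct ξ η × Acct ξ' η') (e : p ⟶ q),
        (τ.map e).val =
          (Fin.append e.1.val.1 e.2.val.1, Fin.append e.1.val.2 e.2.val.2)) :=
  statement9_general ξ η ξ' η'
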